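/- Let W ⊂ ℂ[x₀,…,x₅] be the 56-dimensional vector space of homogeneous cubic forms in six variables, and let S ⊂ ℂ⁶ be the affine cone over a rational normal cubic cone, namely the image of the map ℂ⁴ → ℂ⁶, (λ, μ, s, t) ↦ (λ, μs³, μs²t, μst², μt³, 0). Then the subspace of cubics F ∈ W vanishing identically on S has dimension 34, i.e. codimension 22 in W. -/

import Mathlib

/-!
Pulling a cubic back along the parametrization `(λ, μ, s, t) ↦ (λ, μs³, μs²t, μst², μt³, 0)`
of `S` gives a polynomial in `λ, μ, s, t`, and since `ℂ` is infinite, the cubic vanishes on `S`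
exactly when this pullback is zero. The pullback kills every monomial containing `x₅` and sends
every other cubic monomial to a single monomial `λᵃ μᵇ sᶜ tᵉ` with `a + b = 3` and `c + e = 3b`;
all `1 + 4 + 7 + 10 = 22` of these occur. So the pullback has rank 22 on the 56-dimensional space
of cubics, and rank–nullity leaves a kernel of dimension 34.
-/

open MvPolynomial

noncomputable section

/-- The affine cone in `ℂ⁶` over a rational normal cubic cone: the image of the
map `ℂ⁴ → ℂ⁶`, `(λ, μ, s, t) ↦ (λ, μs³, μs²t, μst², μt³, 0)`. -/
def twistedCubicCone : Set (Fin 6 → ℂ) :=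
  {v | ∃ l m s t : ℂ, v = ![l, m * s ^ 3, m * s ^ 2 * t, m * s * t ^ 2, m * t ^ 3, 0]}

open Module

theorem Submodule.finrank_inf_ker_add_finrank_map {K V W : Type*} [DivisionRing K]
    [AddCommGroup V] [Module K V] [AddCommGroup W] [Module K W] (L : Submodule K V)
    [FiniteDimensional K L] (f : V →ₗ[K] W) :
    finrank K ↥(L ⊓ LinearMap.ker f) + finrank K ↥(L.map f) = finrank K L := by
  have hker : (L ⊓ LinearMap.ker f).comap L.subtype = (LinearMap.ker f).comap L.subtype := by
    ext; simp
  rw [← LinearMap.range_domRestrict, ← LinearMap.finrank_range_add_finrank_ker (f.domRestrict L),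
    LinearMap.ker_domRestrict, ← hker, (Submodule.comapSubtypeEquivOfLe inf_le_left).finrank_eq,
    add_comm]

theorem Finsupp.natCard_degree_eq_card_antidiagonalTuple (k n : ℕ) :
    Nat.card {d : Fin k →₀ ℕ // d.degree = n} = (Finset.Nat.antidiagonalTuple k n).card := by
  rw [← Nat.card_eq_finsetCard]
  exact Nat.card_congr <| Finsupp.equivFunOnFinite.subtypeEquiv fun d => by
    rw [Finset.Nat.mem_antidiagonalTuple, Finsupp.degree_eq_sum]
    rfl

namespace MvPolynomial

theorem iInf_ker_aeval_range_eval {R σ τ : Type*} [CommRing R] [IsDomain R] [Infinite R]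
    (f : σ → MvPolynomial τ R) :
    ⨅ v ∈ Set.range fun (x : τ → R) i => eval x (f i),
        LinearMap.ker (aeval (R := R) v).toLinearMap =
      LinearMap.ker (aeval f).toLinearMap := by
  ext p
  simp only [Submodule.mem_iInf, Set.forall_mem_range, LinearMap.mem_ker,
    AlgHom.toLinearMap_apply, funext_iff (q := 0), map_zero, ← aeval_eq_eval, comp_aeval_apply]

theorem homogeneousSubmodule_eq_span_monomial (σ R : Type*) [CommSemiring R] (n : ℕ) :
    homogeneousSubmodule σ R n =
      Submodule.span R ((monomial · 1) '' {d : σ →₀ ℕ | d.degree = n}) := by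
  rw [homogeneousSubmodule_eq_finsupp_supported, AddMonoidAlgebra.supported_eq_span_single]
  simp only [single_eq_monomial]

theorem finrank_homogeneousSubmodule (σ R : Type*) [CommRing R] [StrongRankCondition R]
    (n : ℕ) :
    finrank R (homogeneousSubmodule σ R n) = Nat.card {d : σ →₀ ℕ // d.degree = n} := by
  rw [homogeneousSubmodule_eq_finsupp_supported,
    (AddMonoidAlgebra.supportedEquivFinsupp _).finrank_eq,
    finrank_eq_nat_card_basis Finsupp.basisSingleOne]
  rfl

theorem finrank_span_monomial {σ K : Type*} [Field K] (E : Finset (σ →₀ ℕ)) :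
    finrank K (Submodule.span K ((monomial · (1 : K)) '' (E : Set (σ →₀ ℕ)))) = E.card := by
  rw [Set.image_eq_range, finrank_span_eq_card, ← Set.toFinset_card, Finset.toFinset_coe]
  exact (basisMonomials σ K).linearIndependent.comp _ Subtype.val_injective

end MvPolynomial

namespace TwistedCubicCone

def parametrization : Fin 6 → MvPolynomial (Fin 4) ℂ :=
  ![X 0, X 1 * X 2 ^ 3, X 1 * X 2 ^ 2 * X 3, X 1 * X 2 * X 3 ^ 2, X 1 * X 3 ^ 3, 0]

theorem twistedCubicCone_eq_range :
    twistedCubicCone = Set.range fun x i => eval x (parametrization i) := by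
  ext v
  constructor
  · rintro ⟨l, m, s, t, rfl⟩
    exact ⟨![l, m, s, t], by funext i; fin_cases i <;> simp [parametrization]⟩
  · rintro ⟨x, rfl⟩
    exact ⟨x 0, x 1, x 2, x 3, by funext i; fin_cases i <;> simp [parametrization]⟩

def pullbackExponent (d : Fin 6 → ℕ) : Fin 4 → ℕ :=
  ![d 0, d 1 + d 2 + d 3 + d 4, 3 * d 1 + 2 * d 2 + d 3, d 2 + 2 * d 3 + 3 * d 4]

def cubicPullbackExponents : Finset (Fin 4 →₀ ℕ) :=
  (((Finset.Nat.antidiagonalTuple 6 3).filter (· 5 = 0)).image pullbackExponent).map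
    Finsupp.equivFunOnFinite.symm.toEmbedding

theorem card_cubicPullbackExponents : cubicPullbackExponents.card = 22 := by
  rw [cubicPullbackExponents, Finset.card_map]
  decide

theorem mem_cubicPullbackExponents {e : Fin 4 →₀ ℕ} :
    e ∈ cubicPullbackExponents ↔ ∃ d : Fin 6 →₀ ℕ,
      d.degree = 3 ∧ d 5 = 0 ∧ Finsupp.equivFunOnFinite.symm (pullbackExponent d) = e := by
  simp only [cubicPullbackExponents, Finset.mem_map, Finset.mem_image, Finset.mem_filter,
    Finset.Nat.mem_antidiagonalTuple, Equiv.coe_toEmbedding, Finsupp.degree_eq_sum]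
  constructor
  · rintro ⟨_, ⟨d, ⟨hd, h5⟩, rfl⟩, rfl⟩
    exact ⟨Finsupp.equivFunOnFinite.symm d, hd, h5, rfl⟩
  · rintro ⟨d, hd, h5, rfl⟩
    exact ⟨_, ⟨d, ⟨hd, h5⟩, rfl⟩, rfl⟩

theorem aeval_parametrization_monomial (d : Fin 6 →₀ ℕ) :
    aeval (R := ℂ) parametrization (monomial d 1) =
      if d 5 = 0 then monomial (Finsupp.equivFunOnFinite.symm (pullbackExponent d)) 1 else 0 := by
  rw [aeval_monomial, map_one, one_mul, Finsupp.prod_fintype _ _ fun _ => pow_zero _]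
  split_ifs with h5
  · rw [monomial_eq, map_one, one_mul, Finsupp.prod_fintype _ _ fun _ => pow_zero _]
    simp only [Fin.prod_univ_six, Fin.prod_univ_four, Finsupp.coe_equivFunOnFinite_symm,
      pullbackExponent, parametrization, Matrix.cons_val, h5, pow_zero, mul_one]
    ring
  · exact Finset.prod_eq_zero (Finset.mem_univ 5) (zero_pow h5)

theorem map_homogeneousSubmodule_three :
    (homogeneousSubmodule (Fin 6) ℂ 3).map (aeval parametrization).toLinearMap =
      Submodule.span ℂ ((monomial · 1) '' (cubicPullbackExponents : Set (Fin 4 →₀ ℕ))) := by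
  rw [homogeneousSubmodule_eq_span_monomial, Submodule.map_span, Set.image_image]
  apply le_antisymm
  · rw [Submodule.span_le]
    rintro _ ⟨d, hd, rfl⟩
    dsimp only
    rw [AlgHom.toLinearMap_apply, aeval_parametrization_monomial]
    split_ifs with h5
    · exact Submodule.subset_span ⟨_, mem_cubicPullbackExponents.2 ⟨d, hd, h5, rfl⟩, rfl⟩
    · exact Submodule.zero_mem _
  · apply Submodule.span_mono
    rintro _ ⟨e, he, rfl⟩
    obtain ⟨d, hd, h5, rfl⟩ := mem_cubicPullbackExponents.1 he
    exact ⟨d, hd, by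
      dsimp only
      rw [AlgHom.toLinearMap_apply, aeval_parametrization_monomial, if_pos h5]⟩

end TwistedCubicCone

open TwistedCubicCone in
theorem cubics_vanishing_on_twisted_cubic_cone :
    Module.finrank ℂ ↥(homogeneousSubmodule (Fin 6) ℂ 3) = 56 ∧
    Module.finrank ℂ
      ↥(homogeneousSubmodule (Fin 6) ℂ 3 ⊓
        ⨅ v ∈ twistedCubicCone, LinearMap.ker (aeval (R := ℂ) v).toLinearMap) = 34 := by
  have hcubics : finrank ℂ ↥(homogeneousSubmodule (Fin 6) ℂ 3) = 56 := by
    rw [finrank_homogeneousSubmodule, Finsupp.natCard_degree_eq_card_antidiagonalTuple]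
    decide
  have : FiniteDimensional ℂ (homogeneousSubmodule (Fin 6) ℂ 3) :=
    Module.finite_of_finrank_pos (by rw [hcubics]; norm_num)
  refine ⟨hcubics, ?_⟩
  have hrank := (homogeneousSubmodule (Fin 6) ℂ 3).finrank_inf_ker_add_finrank_map
    (aeval parametrization).toLinearMap
  rw [← iInf_ker_aeval_range_eval, ← twistedCubicCone_eq_range, map_homogeneousSubmodule_three,
    finrank_span_monomial, card_cubicPullbackExponents, hcubics] at hrank
  omega
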